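/- Let P be a partial order viewed as a category, α : Pᵒᵖ ⥤ Type a presheaf, and x ∈ P. Then the set Nat(α, yoneda.obj x) of natural transformations from α to the representable presheaf at x has at most one element, and it is nonempty if and only if x is an upper bound of the set { y ∈ P | α(y) is nonempty }. Consequently, for the lower set L = { y ∈ P | α(y) is nonempty } (which is downward closed), viewed as a presheaf with values in {∅, point}, there is an isomorphism Nat(α, yoneda.obj x) ≅ Nat(L, yoneda.obj x) natural in x; hence the Isbell left adjoint H^* takes the same value on α as on L. -/

import Mathlib

open CategoryTheory CategoryTheory.Limits Opposite

universe u

namespace DMCat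

variable {A B : Type u} [SmallCategory A] [SmallCategory B]

/-- The presheaf `Φ(-, b)` associated to a profunctor `Φ : Aᵒᵖ × B ⥤ Type u`. -/
def curryR (Φ : Aᵒᵖ × B ⥤ Type u) (b : B) : Aᵒᵖ ⥤ Type u :=
  (CategoryTheory.Functor.curry.obj Φ).flip.obj b

/-- The postsheaf `Φ(a, -)` associated to a profunctor `Φ : Aᵒᵖ × B ⥤ Type u`. -/
def curryL (Φ : Aᵒᵖ × B ⥤ Type u) (a : Aᵒᵖ) : B ⥤ Type u :=
  (CategoryTheory.Functor.curry.obj Φ).obj a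

/-- The left extension `Φ^* : (Aᵒᵖ ⥤ Type u) ⥤ (B ⥤ Type u)ᵒᵖ`,
`(Φ^* α)(b) = Nat(α, Φ(-, b))`. -/
def upper (Φ : Aᵒᵖ × B ⥤ Type u) : (Aᵒᵖ ⥤ Type u) ⥤ (B ⥤ Type u)ᵒᵖ where
  obj α := op
    { obj := fun b => α ⟶ curryR Φ b
      map := fun {b b'} g => TypeCat.ofHom fun t => t ≫ (CategoryTheory.Functor.curry.obj Φ).flip.map g
      map_id := by
        intro b
        refine ConcreteCategory.hom_ext _ _ fun t => ?_
        simp [curryR] <;> rfl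
      map_comp := by
        intro b b' b'' g g'
        refine ConcreteCategory.hom_ext _ _ fun t => ?_
        simp [curryR] <;> rfl }
  map {α α'} f := Quiver.Hom.op
    { app := fun b => TypeCat.ofHom fun t => f ≫ t
      naturality := by intro b b' g; refine ConcreteCategory.hom_ext _ _ fun t => ?_; first | rfl | simp [Category.assoc] }
  map_id := by intro α; apply Quiver.Hom.unop_inj; apply NatTrans.ext; funext b; refine ConcreteCategory.hom_ext _ _ fun t => ?_; first | rfl | simp [Category.assoc]
  map_comp := by intro α α' α'' f f'; apply Quiver.Hom.unop_inj; apply NatTrans.ext; funext b; refine ConcreteCategory.hom_ext _ _ fun t => ?_; first | rfl | simp [Category.assoc]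

/-- The right extension `Φ_* : (B ⥤ Type u)ᵒᵖ ⥤ (Aᵒᵖ ⥤ Type u)`,
`(Φ_* β)(a) = Nat(β, Φ(a, -))`. -/
def lower (Φ : Aᵒᵖ × B ⥤ Type u) : (B ⥤ Type u)ᵒᵖ ⥤ (Aᵒᵖ ⥤ Type u) where
  obj β :=
    { obj := fun a => β.unop ⟶ curryL Φ a
      map := fun {a a'} f => TypeCat.ofHom fun t => t ≫ (CategoryTheory.Functor.curry.obj Φ).map f
      map_id := by intro a; refine ConcreteCategory.hom_ext _ _ fun t => ?_; simp [curryL] <;> rfl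
      map_comp := by intro a a' a'' f f'; refine ConcreteCategory.hom_ext _ _ fun t => ?_; simp [curryL] <;> rfl }
  map {β β'} f :=
    { app := fun a => TypeCat.ofHom fun t => f.unop ≫ t
      naturality := by intro a a' g; refine ConcreteCategory.hom_ext _ _ fun t => ?_; first | rfl | simp [Category.assoc] }
  map_id := by intro β; apply NatTrans.ext; funext a; refine ConcreteCategory.hom_ext _ _ fun t => ?_; first | rfl | simp [Category.assoc]
  map_comp := by intro β β' β'' f f'; apply NatTrans.ext; funext a; refine ConcreteCategory.hom_ext _ _ fun t => ?_; first | rfl | simp [Category.assoc]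

/-- The adjunction `Φ^* ⊣ Φ_*`. -/
def matrixAdj (Φ : Aᵒᵖ × B ⥤ Type u) : upper Φ ⊣ lower Φ :=
  Adjunction.mkOfHomEquiv
    { homEquiv := fun α β =>
        { toFun := fun t =>
            { app := fun a => TypeCat.ofHom fun x =>
                { app := fun b => TypeCat.ofHom fun y => ((t.unop.app b y).app a x : Φ.obj (a, b))
                  naturality := by
                    intro b b' g
                    refine ConcreteCategory.hom_ext _ _ fun y => ?_
                    have h1 := types_congr_hom (NatTrans.congr_app (types_congr_hom (t.unop.naturality g) y) a) x
                    exact h1 }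
              naturality := by
                intro a a' f
                refine ConcreteCategory.hom_ext _ _ fun x => ?_
                apply NatTrans.ext
                funext b; refine ConcreteCategory.hom_ext _ _ fun y => ?_
                have := types_congr_hom ((t.unop.app b y).naturality f) x
                exact this }
          invFun := fun s => Quiver.Hom.op
            { app := fun b => TypeCat.ofHom fun y =>
                { app := fun a => TypeCat.ofHom fun x => ((s.app a x).app b y : Φ.obj (a, b))
                  naturality := by
                    intro a a' f
                    refine ConcreteCategory.hom_ext _ _ fun x => ?_
                    have := types_congr_hom (NatTrans.congr_app (types_congr_hom (s.naturality f) x) b) y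
                    exact this }
              naturality := by
                intro b b' g
                refine ConcreteCategory.hom_ext _ _ fun y => ?_
                apply NatTrans.ext
                funext a; refine ConcreteCategory.hom_ext _ _ fun x => ?_
                have := types_congr_hom ((s.app a x).naturality g) y
                exact this }
          left_inv := by
            intro t
            apply Quiver.Hom.unop_inj
            apply NatTrans.ext
            funext b
            refine ConcreteCategory.hom_ext _ _ fun y => ?_
            apply NatTrans.ext
            funext a; refine ConcreteCategory.hom_ext _ _ fun x => ?_
            rfl
          right_inv := by
            intro s
            apply NatTrans.ext
            funext a
            refine ConcreteCategory.hom_ext _ _ fun x => ?_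
            apply NatTrans.ext
            funext b; refine ConcreteCategory.hom_ext _ _ fun y => ?_
            rfl }
      homEquiv_naturality_left_symm := by
        intro α α' β f g
        apply Quiver.Hom.unop_inj
        apply NatTrans.ext
        funext b; refine ConcreteCategory.hom_ext _ _ fun y => ?_
        apply NatTrans.ext
        funext a; refine ConcreteCategory.hom_ext _ _ fun x => ?_
        rfl
      homEquiv_naturality_right := by
        intro α β β' f g
        apply NatTrans.ext
        funext a
        refine ConcreteCategory.hom_ext _ _ fun x => ?_
        apply NatTrans.ext
        funext b; refine ConcreteCategory.hom_ext _ _ fun y => ?_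
        rfl }

end DMCat

open DMCat

/-- The lower-set presheaf `{ y | α(y) ≠ ∅ }` of a presheaf `α` on a partial order `P`,
with values in `{∅, point}`. -/
def lowerPresheaf {P : Type u} [PartialOrder P] (α : Pᵒᵖ ⥤ Type u) : Pᵒᵖ ⥤ Type u where
  obj y := ULift.{u} (PLift (Nonempty (α.obj y)))
  map f := TypeCat.ofHom fun p => ULift.up (PLift.up (Nonempty.map (α.map f) p.down.down))
  map_id := by intro y; refine ConcreteCategory.hom_ext _ _ fun p => ?_; apply Subsingleton.elim
  map_comp := by intro y y' y'' f f'; refine ConcreteCategory.hom_ext _ _ fun p => ?_; apply Subsingleton.elim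

section Helpers

variable {P : Type u} [PartialOrder P]

theorem natTrans_subsingleton {C : Type u} [SmallCategory C] (F G : C ⥤ Type u)
    (h : ∀ a, Subsingleton (G.obj a)) : Subsingleton (F ⟶ G) :=
  ⟨fun s t => by ext a x; exact (h a).elim _ _⟩

/-- Build a natural transformation into `yoneda.obj x`. -/
def mkToYoneda (β : Pᵒᵖ ⥤ Type u) (x : P) (h : ∀ (y : Pᵒᵖ), β.obj y → unop y ≤ x) :
    β ⟶ yoneda.obj x where
  app y := TypeCat.ofHom fun b => homOfLE (h y b)
  naturality y y' f := by
    refine ConcreteCategory.hom_ext _ _ fun b => ?_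
    exact Subsingleton.elim (α := unop y' ⟶ x) _ _

end Helpers

/-- For a partial order `P`, a presheaf `α : Pᵒᵖ ⥤ Type` and `x ∈ P`:
`Nat(α, yoneda.obj x)` has at most one element; it is nonempty iff `x` is an upper bound of
`{ y | α(y) ≠ ∅ }`; consequently there is an isomorphism
`Nat(α, yoneda.obj x) ≅ Nat(L, yoneda.obj x)` natural in `x`, where `L` is the lower-set
presheaf of `α`, and the Isbell left adjoint `H^*` takes the same value on `α` as on `L`. -/
theorem presheaf_on_poset_nat_to_representable {P : Type u} [PartialOrder P]
    (α : Pᵒᵖ ⥤ Type u) :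
    (∀ x : P, Subsingleton (α ⟶ yoneda.obj x)) ∧
    (∀ x : P, Nonempty (α ⟶ yoneda.obj x) ↔
      x ∈ upperBounds {y : P | Nonempty (α.obj (op y))}) ∧
    (∃ e : ∀ x : P, (α ⟶ yoneda.obj x) ≃ (lowerPresheaf α ⟶ yoneda.obj x),
      ∀ (x x' : P) (f : x ⟶ x') (t : α ⟶ yoneda.obj x),
        e x t ≫ yoneda.map f = e x' (t ≫ yoneda.map f)) ∧
    Nonempty ((upper (Functor.hom P)).obj α ≅ (upper (Functor.hom P)).obj (lowerPresheaf α)) := by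
  have hsub : ∀ (β : Pᵒᵖ ⥤ Type u) (x : P), Subsingleton (β ⟶ yoneda.obj x) := fun β x =>
    natTrans_subsingleton _ _ (fun a => inferInstanceAs (Subsingleton (unop a ⟶ x)))
  have hfwd : ∀ (x : P) (t : α ⟶ yoneda.obj x),
      x ∈ upperBounds {y : P | Nonempty (α.obj (op y))} := by
    intro x t y hy
    exact leOfHom (t.app (op y) hy.some)
  have hLfwd : ∀ (x : P) (t : lowerPresheaf α ⟶ yoneda.obj x),
      x ∈ upperBounds {y : P | Nonempty (α.obj (op y))} := by
    intro x t y hy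
    exact leOfHom (t.app (op y) (ULift.up (PLift.up hy) : (lowerPresheaf α).obj (op y)))
  have hbwd : ∀ (x : P), x ∈ upperBounds {y : P | Nonempty (α.obj (op y))} →
      (α ⟶ yoneda.obj x) :=
    fun x hx => mkToYoneda α x (fun y a => hx (Set.mem_setOf.mpr ⟨a⟩))
  have hLbwd : ∀ (x : P), x ∈ upperBounds {y : P | Nonempty (α.obj (op y))} →
      (lowerPresheaf α ⟶ yoneda.obj x) :=
    fun x hx => mkToYoneda (lowerPresheaf α) x (fun y p => hx (Set.mem_setOf.mpr (show ULift.{u} (PLift (Nonempty (α.obj y))) from p).down.down))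
  refine ⟨fun x => hsub α x, fun x => ⟨fun ⟨t⟩ => hfwd x t, fun hx => ⟨hbwd x hx⟩⟩, ?_, ?_⟩
  · refine ⟨fun x =>
      { toFun := fun t => hLbwd x (hfwd x t)
        invFun := fun s => hbwd x (hLfwd x s)
        left_inv := fun t => (hsub α x).elim _ _
        right_inv := fun s => (hsub (lowerPresheaf α) x).elim _ _ }, ?_⟩
    intro x x' f t
    exact (hsub (lowerPresheaf α) x').elim _ _
  · -- hom types in the curried profunctor are hom types of `P`
    have hsub' : ∀ (β : Pᵒᵖ ⥤ Type u) (b : P),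
        Subsingleton (β ⟶ curryR (Functor.hom P) b) := fun β b =>
      natTrans_subsingleton _ _ (fun a => inferInstanceAs (Subsingleton (unop a ⟶ b)))
    have fwd' : ∀ (b : P) (t : α ⟶ curryR (Functor.hom P) b),
        (lowerPresheaf α ⟶ curryR (Functor.hom P) b) := by
      intro b t
      refine
        { app := fun y => TypeCat.ofHom fun (p : ULift.{u} (PLift (Nonempty (α.obj y)))) => homOfLE ((show unop y ≤ b from leOfHom (show unop y ⟶ b from t.app y p.down.down.some)))
          naturality := ?_ }
      intro y y' f
      refine ConcreteCategory.hom_ext _ _ fun p => ?_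
      exact Subsingleton.elim (α := unop y' ⟶ b) _ _
    have bwd' : ∀ (b : P) (s : lowerPresheaf α ⟶ curryR (Functor.hom P) b),
        (α ⟶ curryR (Functor.hom P) b) := by
      intro b s
      refine
        { app := fun y => TypeCat.ofHom fun (a : α.obj y) =>
            homOfLE ((show unop y ≤ b from leOfHom (show unop y ⟶ b from s.app y (ULift.up (PLift.up ⟨a⟩) : (lowerPresheaf α).obj y))))
          naturality := ?_ }
      intro y y' f
      refine ConcreteCategory.hom_ext _ _ fun a => ?_
      exact Subsingleton.elim (α := unop y' ⟶ b) _ _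
    refine ⟨Iso.op (X := ((upper (Functor.hom P)).obj (lowerPresheaf α)).unop)
      (Y := ((upper (Functor.hom P)).obj α).unop) ?_⟩
    refine NatIso.ofComponents (fun b =>
      { hom := TypeCat.ofHom fun (s : lowerPresheaf α ⟶ curryR (Functor.hom P) b) => bwd' b s
        inv := TypeCat.ofHom fun (t : α ⟶ curryR (Functor.hom P) b) => fwd' b t
        hom_inv_id := by refine ConcreteCategory.hom_ext _ _ fun s => ?_; exact (hsub' (lowerPresheaf α) b).elim _ _
        inv_hom_id := by refine ConcreteCategory.hom_ext _ _ fun t => ?_; exact (hsub' α b).elim _ _ }) ?_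
    intro b b' g
    refine ConcreteCategory.hom_ext _ _ fun s => ?_
    exact (hsub' α b').elim _ _
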